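/- Let G be a finite bipartite simple graph with bipartition (A, B), let M[G] be its fundamental transversal matroid, let (U, V) be a partition of A ∪ B, and let S be a vertex cover of the crossing subgraph H. Let X ⊆ U and Y ⊆ V be independent sets of M[G]. If X ∪ Y is independent in M[G], then there exist a matching M_X certifying the independence of X and a matching M_Y certifying the independence of Y such that the signatures 𝒞(X, M_X) and 𝒞(Y, M_Y) are compatible. -/

import Mathlib

open Set

noncomputable def mrank {α : Type*} (M : Matroid α) (X : Set α) : ℕ :=
  sSup {n | ∃ I, I ⊆ X ∧ M.Indep I ∧ I.ncard = n}

noncomputable def connVal {α : Type*} (M : Matroid α) (U : Set α) : ℕ :=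
  mrank M U + mrank M (M.E \ U) - mrank M M.E

def Sim {α : Type*} (M : Matroid α) (U X X' : Set α) : Prop :=
  ∀ Z ⊆ M.E \ U, (M.Indep (X ∪ Z) ↔ M.Indep (X' ∪ Z))

def SimClassesLE {α : Type*} (M : Matroid α) (U : Set α) (k : ℕ) : Prop :=
  ∃ f : Set α → Fin k, ∀ X X' : Set α, X ⊆ U → X' ⊆ U → f X = f X' → Sim M U X X'

structure Decomp {α : Type*} (M : Matroid α) where
  V : Type
  fin : Finite V
  T : SimpleGraph V
  conn : T.Connected
  acyc : T.IsAcyclic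
  deg : ∀ v : V, (T.neighborSet v).ncard = 1 ∨ (T.neighborSet v).ncard = 3
  leafEquiv : M.E ≃ {v : V // (T.neighborSet v).ncard = 1}

def Decomp.Displays {α : Type*} {M : Matroid α} (D : Decomp M) (U : Set α) : Prop :=
  ∃ u v : D.V, D.T.Adj u v ∧
    U = {x | ∃ h : x ∈ M.E, (D.T.deleteEdges {s(u, v)}).Reachable (D.leafEquiv ⟨x, h⟩).1 u}

def bwLE {α : Type*} (M : Matroid α) (k : ℕ) : Prop :=
  ∃ D : Decomp M, ∀ U, D.Displays U → connVal M U + 1 ≤ k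

def dwLE {α : Type*} (M : Matroid α) (k : ℕ) : Prop :=
  ∃ D : Decomp M, ∀ U, D.Displays U → SimClassesLE M U k

def Pigeonhole {α : Type*} (C : Set (Matroid α)) : Prop :=
  ∀ l : ℕ, 0 < l → ∃ ρ : ℕ, ∀ M ∈ C, bwLE M l → dwLE M ρ

/-- A matching of a graph: a set of edges, pairwise sharing no vertex. -/
def IsGraphMatching {α : Type*} (G : SimpleGraph α) (m : Set (Sym2 α)) : Prop :=
  m ⊆ G.edgeSet ∧ m.Pairwise fun e f => ∀ x, x ∈ e → x ∉ f

/-- A matching \`m\` certifies the independence of \`X\` in the fundamental transversal matroid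
of the bipartite graph \`G\` with bipartition \`(A, B)\`: \`|m| = |X ∩ A|\` and every edge of
\`m\` joins a vertex of \`X ∩ A\` to a vertex of \`B \ X\`. -/
def CertifiesIndep {α : Type*} (G : SimpleGraph α) (A B X : Set α) (m : Set (Sym2 α)) : Prop :=
  IsGraphMatching G m ∧ m.Finite ∧ m.ncard = (X ∩ A).ncard ∧
    ∀ e ∈ m, ∃ a b, a ∈ X ∩ A ∧ b ∈ B \ X ∧ e = s(a, b)

/-- Signatures: the data (S₁, 𝒮₂, S₃, S₄). -/
structure Signature (α : Type*) where
  s1 : Set α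
  s2 : Set (Set α)
  s3 : Set α
  s4 : Set α

/-- The signature 𝒞(X, m) of an independent set \`X ⊆ P\` with certifying matching \`m\`,
relative to the bipartition (A, B), the vertex cover \`S\`, and the partition \`{P, Q}\`. -/
def signatureOf {α : Type*} (G : SimpleGraph α) (A B S P Q X : Set α)
    (m : Set (Sym2 α)) : Signature α where
  s1 := {b | b ∈ B ∩ P ∩ S ∧ (b ∈ X ∨ ∃ e ∈ m, b ∈ e)}
  s2 := {Z | Z ⊆ A ∩ Q ∩ S ∧ ∃ m' : Set (Sym2 α), IsGraphMatching G m' ∧ m ⊆ m' ∧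
          (m' \ m).Finite ∧ (m' \ m).ncard = Z.ncard ∧
          ∀ e ∈ m' \ m, ∃ z b, z ∈ Z ∧ b ∈ (B ∩ P) \ (S ∪ X) ∧ e = s(z, b)}
  s3 := {a | a ∈ A ∩ P ∩ S ∧ ∃ b ∈ (B ∩ Q) \ S, s(a, b) ∈ m}
  s4 := {b | b ∈ B ∩ Q ∩ S ∧ ∃ a ∈ A ∩ P, s(a, b) ∈ m}

/-- Compatibility of a signature of a subset of U with a signature of a subset of V. -/
def SigCompatible {α : Type*} (σ τ : Signature α) : Prop :=
  σ.s1 ∩ τ.s4 = ∅ ∧ τ.s3 ∈ σ.s2 ∧ σ.s3 ∈ τ.s2 ∧ σ.s4 ∩ τ.s1 = ∅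

/-- \`S\` is a vertex cover of the crossing subgraph \`H\` determined by the partition (U, V). -/
def IsCrossingCover {α : Type*} (G : SimpleGraph α) (A B U V S : Set α) : Prop :=
  ∀ x y, G.Adj x y →
    ((x ∈ B ∩ U ∧ y ∈ A ∩ V) ∨ (x ∈ B ∩ V ∧ y ∈ A ∩ U)) → x ∈ S ∨ y ∈ S

/-! Take one matching `m` certifying `X ∪ Y` and split it into the edges meeting `X` and those
meeting `Y`. Every edge of `m` has exactly one end in `X ∪ Y`, so the two parts partition `m`, and
each part injects into `X ∩ A`, resp. `Y ∩ A`; as `|m| = |(X ∪ Y) ∩ A|`, both injections are onto,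
so the parts certify `X` and `Y`. Being disjoint parts of one matching, they give
`S₁ ∩ T₄ = ∅ = S₄ ∩ T₁`, and adding to the `X`-part the edges of the `Y`-part at the vertices of
`T₃` witnesses `T₃ ∈ 𝒮₂` (symmetrically `S₃ ∈ 𝒯₂`). -/

def edgesMeeting {α : Type*} (m : Set (Sym2 α)) (X : Set α) : Set (Sym2 α) :=
  {e ∈ m | ∃ x ∈ X, x ∈ e}

section

variable {α : Type*} {G : SimpleGraph α} {A B W X Y Z : Set α} {m : Set (Sym2 α)}

lemma edgesMeeting_subset : edgesMeeting m X ⊆ m := fun _ he => he.1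

lemma edgesMeeting_mono (h : X ⊆ Y) : edgesMeeting m X ⊆ edgesMeeting m Y :=
  fun _ ⟨he, x, hx, hxe⟩ => ⟨he, x, h hx, hxe⟩

lemma edgesMeeting_union : edgesMeeting m (X ∪ Y) = edgesMeeting m X ∪ edgesMeeting m Y := by
  ext e
  simp only [edgesMeeting, mem_ofPred_eq, mem_union, or_and_right, exists_or, and_or_left]

lemma IsGraphMatching.mono {m' : Set (Sym2 α)} (hm : IsGraphMatching G m) (h : m' ⊆ m) :
    IsGraphMatching G m' :=
  ⟨h.trans hm.1, hm.2.mono h⟩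

lemma IsGraphMatching.eq_of_mem {e f : Sym2 α} {x : α} (hm : IsGraphMatching G m)
    (he : e ∈ m) (hf : f ∈ m) (hxe : x ∈ e) (hxf : x ∈ f) : e = f := by
  by_contra hne
  exact hm.2 he hf hne x hxe hxf

/-- Choosing a vertex of `T` on each edge is injective on a matching. -/
lemma IsGraphMatching.ncard_le {T : Set α} (hm : IsGraphMatching G m) (hT : T.Finite)
    (hmT : ∀ e ∈ m, ∃ x ∈ T, x ∈ e) : m.ncard ≤ T.ncard := by
  obtain rfl | ⟨e₀, he₀⟩ := m.eq_empty_or_nonempty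
  · simp
  obtain ⟨x₀, -⟩ := hmT e₀ he₀
  have : Nonempty α := ⟨x₀⟩
  have hpick : ∀ e ∈ m, (Classical.epsilon fun x => x ∈ T ∧ x ∈ e) ∈ T ∧
      (Classical.epsilon fun x => x ∈ T ∧ x ∈ e) ∈ e := fun e he =>
    let ⟨x, hx⟩ := hmT e he
    Classical.epsilon_spec (p := fun x => x ∈ T ∧ x ∈ e) ⟨x, hx⟩
  refine Set.ncard_le_ncard_of_injOn _ (fun e he => (hpick e he).1) (fun e he f hf hef => ?_) hT
  exact hm.eq_of_mem he hf (hpick e he).2 (hef ▸ (hpick f hf).2)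

lemma CertifiesIndep.notMem_of_mk_mem {x y : α} (h : CertifiesIndep G A B W m)
    (hxy : s(x, y) ∈ m) (hx : x ∈ W) : y ∉ W := by
  obtain ⟨a, b, -, hb, hab⟩ := h.2.2.2 _ hxy
  rcases Sym2.eq_iff.mp hab with ⟨-, rfl⟩ | ⟨rfl, -⟩
  · exact hb.2
  · exact absurd hx hb.2

lemma CertifiesIndep.eq_of_mem {e : Sym2 α} {x y : α} (h : CertifiesIndep G A B W m)
    (he : e ∈ m) (hx : x ∈ e) (hxW : x ∈ W) (hy : y ∈ e) (hyW : y ∈ W) : x = y := by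
  obtain ⟨x', rfl⟩ := (Sym2.mem_iff_exists.mp hx)
  rcases Sym2.mem_iff.mp hy with rfl | rfl
  · rfl
  · exact absurd hyW (h.notMem_of_mk_mem he hxW)

lemma CertifiesIndep.disjoint_edgesMeeting (h : CertifiesIndep G A B W m) (hX : X ⊆ W)
    (hY : Y ⊆ W) (hXY : Disjoint X Y) : Disjoint (edgesMeeting m X) (edgesMeeting m Y) :=
  Set.disjoint_left.mpr fun _ ⟨he, _, hx, hxe⟩ ⟨_, _, hy, hye⟩ =>
    Set.disjoint_left.mp hXY hx (h.eq_of_mem he hxe (hX hx) hye (hY hy) ▸ hy)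

lemma CertifiesIndep.ncard_edgesMeeting_le (h : CertifiesIndep G A B W m)
    (hfin : (W ∩ A).Finite) (hX : X ⊆ W) : (edgesMeeting m X).ncard ≤ (X ∩ A).ncard := by
  refine (h.1.mono edgesMeeting_subset).ncard_le
    (hfin.subset (inter_subset_inter_left A hX)) fun e ⟨he, x, hx, hxe⟩ => ⟨x, ⟨hx, ?_⟩, hxe⟩
  obtain ⟨a, b, ha, -, rfl⟩ := h.2.2.2 e he
  rw [h.eq_of_mem he hxe (hX hx) (Sym2.mem_mk_left a b) ha.1]
  exact ha.2

lemma CertifiesIndep.edgesMeeting_of_subset (h : CertifiesIndep G A B W m)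
    (hfin : (W ∩ A).Finite) (hX : X ⊆ W) : CertifiesIndep G A B X (edgesMeeting m X) := by
  refine ⟨h.1.mono edgesMeeting_subset, h.2.1.subset edgesMeeting_subset, ?_, ?_⟩
  · have hsplit : edgesMeeting m X ∪ edgesMeeting m (W \ X) = m := by
      rw [← edgesMeeting_union, union_sdiff_cancel hX]
      exact subset_antisymm edgesMeeting_subset fun e he =>
        let ⟨a, _, ha, _, hab⟩ := h.2.2.2 e he
        ⟨he, a, ha.1, hab ▸ Sym2.mem_mk_left _ _⟩
    have hm : m.ncard = (edgesMeeting m X).ncard + (edgesMeeting m (W \ X)).ncard := by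
      rw [← Set.ncard_union_eq (h.disjoint_edgesMeeting hX sdiff_subset disjoint_sdiff_right)
        (h.2.1.subset edgesMeeting_subset) (h.2.1.subset edgesMeeting_subset), hsplit]
    have hW : (W ∩ A).ncard = (X ∩ A).ncard + ((W \ X) ∩ A).ncard := by
      rw [← Set.ncard_union_eq (disjoint_sdiff_right.mono inter_subset_left inter_subset_left)
        (hfin.subset (inter_subset_inter_left A hX))
        (hfin.subset (inter_subset_inter_left A sdiff_subset)),
        ← union_inter_distrib_right, union_sdiff_cancel hX]
    have hle := h.ncard_edgesMeeting_le hfin hX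
    have hle' := h.ncard_edgesMeeting_le hfin (sdiff_subset (t := X))
    have hcard := h.2.2.1
    omega
  · rintro e ⟨he, x, hx, hxe⟩
    obtain ⟨a, b, ha, hb, rfl⟩ := h.2.2.2 e he
    obtain rfl := h.eq_of_mem he hxe (hX hx) (Sym2.mem_mk_left a b) ha.1
    exact ⟨x, b, ⟨hx, ha.2⟩, ⟨hb.1, fun hbX => hb.2 (hX hbX)⟩, rfl⟩

lemma signatureOf_s1_inter_s4_eq_empty {S P Q P' Q' : Set α} (hm : IsGraphMatching G m)
    (hXY : Disjoint (edgesMeeting m X) (edgesMeeting m Y)) :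
    (signatureOf G A B S P Q X (edgesMeeting m X)).s1 ∩
      (signatureOf G A B S P' Q' Y (edgesMeeting m Y)).s4 = ∅ := by
  refine Set.eq_empty_iff_forall_notMem.mpr ?_
  rintro b ⟨⟨-, hb⟩, -, a, -, hab⟩
  refine Set.disjoint_left.mp hXY ?_ hab
  rcases hb with hbX | ⟨e, ⟨he, hxe⟩, hbe⟩
  · exact ⟨hab.1, b, hbX, Sym2.mem_mk_right a b⟩
  · exact hm.eq_of_mem he hab.1 hbe (Sym2.mem_mk_right a b) ▸ ⟨he, hxe⟩

lemma signatureOf_s3_subset {S P Q : Set α} (hQY : Disjoint Q Y) :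
    (signatureOf G A B S P Q Y (edgesMeeting m Y)).s3 ⊆ Y := by
  rintro a ⟨-, b, ⟨⟨-, hbQ⟩, -⟩, -, y, hy, hye⟩
  rcases Sym2.mem_iff.mp hye with rfl | rfl
  · exact hy
  · exact absurd hy (Set.disjoint_left.mp hQY hbQ)

/-- The extension witnessing `Z ∈ 𝒮₂` is the restriction of `m` to `X ∪ Z`. -/
lemma CertifiesIndep.mem_signatureOf_s2 {S P Q : Set α} (h : CertifiesIndep G A B W m)
    (hfin : (W ∩ A).Finite) (hXW : X ⊆ W) (hZW : Z ⊆ W) (hZX : Disjoint Z X)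
    (hZ : Z ⊆ A ∩ Q ∩ S) (hZm : ∀ z ∈ Z, ∃ b ∈ (B ∩ P) \ S, s(z, b) ∈ m) :
    Z ∈ (signatureOf G A B S P Q X (edgesMeeting m X)).s2 := by
  have hdiff : edgesMeeting m (X ∪ Z) \ edgesMeeting m X = edgesMeeting m Z := by
    rw [edgesMeeting_union, union_sdiff_left,
      (h.disjoint_edgesMeeting hZW hXW hZX).sdiff_eq_left]
  refine ⟨hZ, edgesMeeting m (X ∪ Z), h.1.mono edgesMeeting_subset,
    edgesMeeting_mono subset_union_left, ?_, ?_, ?_⟩ <;> rw [hdiff]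
  · exact h.2.1.subset edgesMeeting_subset
  · rw [(h.edgesMeeting_of_subset hfin hZW).2.2.1,
      inter_eq_left.mpr (hZ.trans (inter_subset_left.trans inter_subset_left))]
  · rintro e ⟨he, z, hz, hze⟩
    obtain ⟨b, hb, hzb⟩ := hZm z hz
    have hbW := h.notMem_of_mk_mem hzb (hZW hz)
    refine ⟨z, b, hz, ⟨hb.1, ?_⟩, h.1.eq_of_mem he hzb hze (Sym2.mem_mk_left z b)⟩
    rintro (hbS | hbX)
    exacts [hb.2 hbS, hbW (hXW hbX)]

end

theorem indep_union_exists_compatible_signatures_general {α : Type*}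
(G : SimpleGraph α) (A B : Set α)
    (hfin : (A ∪ B).Finite)
    (M : Matroid α)
    (hInd : ∀ X ⊆ A ∪ B, (M.Indep X ↔ ∃ m, CertifiesIndep G A B X m))
    (U V : Set α) (hUV : U ∪ V = A ∪ B) (hdisj : Disjoint U V)
    (S : Set α)
    (X Y : Set α) (hXU : X ⊆ U) (hYV : Y ⊆ V)
    (hXY : M.Indep (X ∪ Y)) :
    ∃ mX mY : Set (Sym2 α), CertifiesIndep G A B X mX ∧ CertifiesIndep G A B Y mY ∧
      SigCompatible (signatureOf G A B S U V X mX) (signatureOf G A B S V U Y mY) := by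
  obtain ⟨m, hm⟩ := (hInd (X ∪ Y) (hUV ▸ union_subset_union hXU hYV)).mp hXY
  have hfin' : ((X ∪ Y) ∩ A).Finite := hfin.subset (inter_subset_right.trans subset_union_left)
  have hXY' : Disjoint X Y := hdisj.mono hXU hYV
  have hmXY := hm.disjoint_edgesMeeting subset_union_left subset_union_right hXY'
  refine ⟨edgesMeeting m X, edgesMeeting m Y, hm.edgesMeeting_of_subset hfin' subset_union_left,
    hm.edgesMeeting_of_subset hfin' subset_union_right,
    signatureOf_s1_inter_s4_eq_empty hm.1 hmXY, ?_, ?_, ?_⟩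
  · exact hm.mem_signatureOf_s2 hfin' subset_union_left
      ((signatureOf_s3_subset (hdisj.mono_right hYV)).trans subset_union_right)
      (hdisj.symm.mono (fun a ha => ha.1.1.2) hXU) (fun a ha => ha.1)
      fun a ⟨_, b, hb, hab⟩ => ⟨b, hb, hab.1⟩
  · exact hm.mem_signatureOf_s2 hfin' subset_union_right
      ((signatureOf_s3_subset (hdisj.mono_left hXU).symm).trans subset_union_left)
      (hdisj.mono (fun a ha => ha.1.1.2) hYV) (fun a ha => ha.1)
      fun a ⟨_, b, hb, hab⟩ => ⟨b, hb, hab.1⟩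
  · rw [inter_comm]
    exact signatureOf_s1_inter_s4_eq_empty hm.1 hmXY.symm

/-- if X ∪ Y is independent then there are certifying matchings whose
signatures are compatible. -/
theorem indep_union_exists_compatible_signatures {α : Type*}
(G : SimpleGraph α) (A B : Set α)
    (hfin : (A ∪ B).Finite) (hAB : Disjoint A B)
    (hbip : ∀ x y, G.Adj x y → (x ∈ A ∧ y ∈ B) ∨ (x ∈ B ∧ y ∈ A))
    (M : Matroid α) (hE : M.E = A ∪ B)
    (hInd : ∀ X ⊆ A ∪ B, (M.Indep X ↔ ∃ m, CertifiesIndep G A B X m))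
    (U V : Set α) (hUV : U ∪ V = A ∪ B) (hdisj : Disjoint U V)
    (S : Set α) (hS : IsCrossingCover G A B U V S)
    (X Y : Set α) (hXU : X ⊆ U) (hYV : Y ⊆ V)
    (hX : M.Indep X) (hY : M.Indep Y)
    (hXY : M.Indep (X ∪ Y)) :
    ∃ mX mY : Set (Sym2 α), CertifiesIndep G A B X mX ∧ CertifiesIndep G A B Y mY ∧
      SigCompatible (signatureOf G A B S U V X mX) (signatureOf G A B S V U Y mY) :=
  indep_union_exists_compatible_signatures_general G A B hfin M hInd U V hUV hdisj S X Y hXU hYV hXY
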